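/- arXiv:1902.10881 — 2 statements merged into one kernel-verified Lean document; each statement's English description precedes it below -/
import Mathlib

section
/- A nonincreasing tuple (s_1,…,s_r) of nonnegative integers arises as the out-degree sequence of an orientation of some simple subgraph of the complete graph K_r if and only if for all 1 ≤ j ≤ r, s_1 + … + s_j ≤ j(2r−1−j)/2. -/
/-!
Call `∑ i ∈ A, s i ≤ #{edges of K_r meeting A}` the Hall condition on a vertex set `A`; the edge
count is `|A|(2r-1-|A|)/2`. It is necessary, because the arcs leaving `A` lie on distinct edges
meeting `A`. It is also sufficient, by Hall's theorem: give vertex `i` one token for each unit of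
`s i`, match the tokens injectively to edges at their vertex, and orient each edge away from the
vertex of its token. For nonincreasing `s`, an initial segment of the same size has the largest
sum, so the condition for all `A` reduces to the prefix sums.
-/

open Finset

/-- `(s 0, …, s (r-1))` is realizable as the sequence of numbers of pairs with a given
first coordinate, for a collection of distinct ordered pairs from `[r] × [r]` with
distinct components containing at most one of `(i,j)` and `(j,i)` for each `i,j`
(equivalently, `s` is the out-degree sequence of an orientation of a simple
subgraph of the complete graph `K r`). -/
def HasOutDegSeq (r : ℕ) (s : ℕ → ℕ) : Prop :=
  ∃ P : Finset (ℕ × ℕ),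
    (∀ p ∈ P, p.1 < r ∧ p.2 < r ∧ p.1 ≠ p.2) ∧
    (∀ p ∈ P, (p.2, p.1) ∉ P) ∧
    (∀ i < r, (P.filter (fun p => p.1 = i)).card = s i)

section CompleteEdges

variable {α : Type*} [DecidableEq α]

def completeEdges (V : Finset α) : Finset (Sym2 α) := V.offDiag.image Sym2.mk.uncurry

def edgesMeeting (V A : Finset α) : Finset (Sym2 α) := {e ∈ completeEdges V | ∃ a ∈ A, a ∈ e}

@[simp] lemma mk_mem_completeEdges {V : Finset α} {a b : α} :
    s(a, b) ∈ completeEdges V ↔ a ∈ V ∧ b ∈ V ∧ a ≠ b := by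
  simp only [completeEdges, mem_image, mem_offDiag, Prod.exists, Function.uncurry_apply_pair,
    Sym2.eq_iff]
  grind

lemma not_isDiag_of_mem_completeEdges {V : Finset α} {e : Sym2 α} (he : e ∈ completeEdges V) :
    ¬e.IsDiag := by
  induction e using Sym2.ind
  simp_all

lemma two_mul_card_completeEdges (V : Finset α) : 2 * #(completeEdges V) = #V * #V - #V := by
  rw [completeEdges, Sym2.two_mul_card_image_offDiag, offDiag_card]

lemma filter_not_meeting_completeEdges (V A : Finset α) :
    {e ∈ completeEdges V | ¬∃ a ∈ A, a ∈ e} = completeEdges (V \ A) := by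
  ext e
  induction e using Sym2.ind
  simp only [mem_filter, mk_mem_completeEdges, Sym2.mem_iff, mem_sdiff]
  grind

lemma two_mul_card_edgesMeeting {V A : Finset α} (hA : A ⊆ V) :
    2 * #(edgesMeeting V A) = #A * (2 * #V - 1 - #A) := by
  have hsplit := card_filter_add_card_filter_not (s := completeEdges V) (fun e => ∃ a ∈ A, a ∈ e)
  rw [filter_not_meeting_completeEdges] at hsplit
  have hV := two_mul_card_completeEdges V
  have hVA := two_mul_card_completeEdges (V \ A)
  obtain ⟨b, hb⟩ := Nat.exists_eq_add_of_le (card_le_card hA)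
  rw [card_sdiff_of_subset hA, hb, Nat.add_sub_cancel_left] at hVA
  rw [hb] at hV ⊢
  rw [edgesMeeting]
  generalize #A = a at *
  rcases a with _ | a
  · rw [zero_add] at hV
    omega
  · rw [show 2 * (a + 1 + b) - 1 - (a + 1) = a + 2 * b by omega]
    have := Nat.le_mul_self (a + 1 + b)
    have := Nat.le_mul_self b
    zify [*] at *
    nlinarith

lemma card_filter_fst_mem_le_card_edgesMeeting {V A : Finset α} {P : Finset (α × α)}
    (hPV : ∀ p ∈ P, p.1 ∈ V ∧ p.2 ∈ V ∧ p.1 ≠ p.2) (hP : ∀ p ∈ P, p.swap ∉ P) :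
    #{p ∈ P | p.1 ∈ A} ≤ #(edgesMeeting V A) := by
  refine card_le_card_of_injOn Sym2.mk.uncurry (fun p hp => ?_) (fun p hp q hq hpq => ?_)
  · obtain ⟨hpP, hpA⟩ := mem_filter.1 hp
    obtain ⟨h1, h2, hne⟩ := hPV p hpP
    exact mem_filter.2 ⟨mk_mem_completeEdges.2 ⟨h1, h2, hne⟩, p.1, hpA, Sym2.mem_mk_left _ _⟩
  · rcases Sym2.mk_eq_mk_iff.1 hpq with h | rfl
    · exact h
    · exact absurd (mem_filter.1 hp).1 (hP q (mem_filter.1 hq).1)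

lemma exists_orientation_of_injective {ι : Type*} [Fintype ι] (v : ι → α) (f : ι → Sym2 α)
    (hf : Function.Injective f) (hv : ∀ x, v x ∈ f x) (hdiag : ∀ x, ¬(f x).IsDiag) :
    ∃ P : Finset (α × α), (∀ p ∈ P, ∃ x, Sym2.mk.uncurry p = f x) ∧ (∀ p ∈ P, p.swap ∉ P) ∧
      ∀ a, #{p ∈ P | p.1 = a} = #{x | v x = a} := by
  set g : ι → α × α := fun x => (v x, Sym2.Mem.other (hv x))
  have hg x : Sym2.mk.uncurry (g x) = f x := Sym2.other_spec (hv x)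
  have hg_inj : Function.Injective g :=
    .of_comp (f := Sym2.mk.uncurry) (by simpa [Function.comp_def, hg] using hf)
  refine ⟨univ.image g, ?_, ?_, fun a => ?_⟩
  · simp only [mem_image, mem_univ, true_and, forall_exists_index]
    rintro p x rfl
    exact ⟨x, hg x⟩
  · simp only [mem_image, mem_univ, true_and, forall_exists_index]
    rintro _ x rfl ⟨y, hy⟩
    have hxy : x = y := hf (by rw [← hg x, ← hg y, hy]; exact Sym2.eq_swap)
    subst hxy
    exact hdiag x (hg x ▸ Sym2.mk_isDiag_iff.2 (congrArg Prod.fst hy))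
  · rw [filter_image, card_image_of_injective _ hg_inj]

end CompleteEdges

lemma sum_le_sum_range_card_of_antitoneOn {M : Type*} [AddCommMonoid M] [PartialOrder M]
    [IsOrderedAddMonoid M] {f : ℕ → M} {r : ℕ} (hf : AntitoneOn f (Set.Iio r)) {A : Finset ℕ}
    (hA : A ⊆ range r) : ∑ i ∈ A, f i ≤ ∑ i ∈ range #A, f i := by
  induction A using Finset.induction_on_max with
  | empty => simp
  | insert a B hlt ih =>
    have haB : a ∉ B := fun h => lt_irrefl a (hlt a h)
    have hB : B ⊆ range a := fun x hx => mem_range.2 (hlt x hx)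
    have har : a < r := mem_range.1 (hA (mem_insert_self a B))
    have hBa : #B ≤ a := by simpa using card_le_card hB
    rw [sum_insert haB, card_insert_of_notMem haB, sum_range_succ, add_comm]
    exact add_le_add (ih ((subset_insert a B).trans hA)) (hf (show #B < r by omega) har hBa)

lemma card_filter_sigma_fst_eq {r : ℕ} (s : ℕ → ℕ) {i : ℕ} (hi : i < r) :
    #{x : (Σ k : Fin r, Fin (s k)) | (x.1 : ℕ) = i} = s i := by
  have : ({x : (Σ k : Fin r, Fin (s k)) | (x.1 : ℕ) = i} : Finset _) =
      ({⟨i, hi⟩} : Finset (Fin r)).sigma fun _ => univ := by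
    ext x
    simp [Fin.ext_iff]
  simp [this]

lemma HasOutDegSeq.sum_le_card_edgesMeeting {r : ℕ} {s : ℕ → ℕ} (h : HasOutDegSeq r s)
    {A : Finset ℕ} (hA : A ⊆ range r) : ∑ i ∈ A, s i ≤ #(edgesMeeting (range r) A) := by
  obtain ⟨P, hPV, hP, hdeg⟩ := h
  calc ∑ i ∈ A, s i = ∑ i ∈ A, #{p ∈ P | p.1 = i} :=
        sum_congr rfl fun i hi => (hdeg i (mem_range.1 (hA hi))).symm
    _ = #{p ∈ P | p.1 ∈ A} := sum_card_fiberwise_eq_card_filter _ _ _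
    _ ≤ #(edgesMeeting (range r) A) :=
        card_filter_fst_mem_le_card_edgesMeeting (by simpa only [mem_range] using hPV) hP

lemma hasOutDegSeq_of_sum_le_card_edgesMeeting {r : ℕ} {s : ℕ → ℕ}
    (hHall : ∀ A ⊆ range r, ∑ i ∈ A, s i ≤ #(edgesMeeting (range r) A)) : HasOutDegSeq r s := by
  let t : (Σ k : Fin r, Fin (s k)) → Finset (Sym2 ℕ) :=
    fun x => {e ∈ completeEdges (range r) | (x.1 : ℕ) ∈ e}
  have hall (S : Finset (Σ k : Fin r, Fin (s k))) : #S ≤ #(S.biUnion t) := by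
    set A := (S.image Sigma.fst).map Fin.valEmbedding
    calc #S ≤ #((S.image Sigma.fst).sigma fun _ => univ) :=
          card_le_card fun x hx => by simpa using ⟨x.2, hx⟩
      _ = ∑ i ∈ A, s i := by simp [A]
      _ ≤ #(edgesMeeting (range r) A) := hHall A fun a ha => by
          obtain ⟨k, -, rfl⟩ := mem_map.1 ha
          exact mem_range.2 k.2
      _ = #(S.biUnion t) := by
          congr 1
          ext e
          simp only [A, t, edgesMeeting, mem_filter, mem_biUnion, mem_map, mem_image]
          aesop
  obtain ⟨f, hf, hft⟩ := (all_card_le_biUnion_card_iff_exists_injective t).1 hall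
  simp only [t, mem_filter] at hft
  obtain ⟨P, hPf, hP, hdeg⟩ := exists_orientation_of_injective (fun x => (x.1 : ℕ)) f hf
    (fun x => (hft x).2) fun x => not_isDiag_of_mem_completeEdges (hft x).1
  refine ⟨P, fun p hp => ?_, hP, fun i hi => by rw [hdeg, card_filter_sigma_fst_eq s hi]⟩
  obtain ⟨x, hx⟩ := hPf p hp
  have hp : s(p.1, p.2) ∈ completeEdges (range r) := by
    rw [show s(p.1, p.2) = f x from hx]
    exact (hft x).1
  simpa using hp

theorem hasOutDegSeq_iff_general (r : ℕ) (s : ℕ → ℕ)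
    (hmono : ∀ i j, i ≤ j → j < r → s j ≤ s i) :
    HasOutDegSeq r s ↔
      ∀ j, 1 ≤ j → j ≤ r →
        2 * ∑ i ∈ Finset.range j, s i ≤ j * (2 * r - 1 - j) := by
  constructor
  · intro h j _ hjr
    have hj : range j ⊆ range r := range_subset_range.2 hjr
    simpa [two_mul_card_edgesMeeting hj] using Nat.mul_le_mul_left 2 (h.sum_le_card_edgesMeeting hj)
  · refine fun h => hasOutDegSeq_of_sum_le_card_edgesMeeting fun A hA => ?_
    have hprefix := sum_le_sum_range_card_of_antitoneOn
      (fun i hi j hj hij => hmono i j hij hj) hA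
    have hcard := two_mul_card_edgesMeeting hA
    rw [card_range] at hcard
    rcases Nat.eq_zero_or_pos #A with h0 | hpos
    · simp [card_eq_zero.1 h0]
    · have := h #A hpos (by simpa using card_le_card hA)
      omega

/-- A nonincreasing tuple of nonnegative integers is the out-degree sequence of an
orientation of a simple subgraph of `K r` if and only if all its partial sums
satisfy `s 0 + ⋯ + s (j-1) ≤ j(2r-1-j)/2`. -/
theorem hasOutDegSeq_iff (r : ℕ) (hr : 1 ≤ r) (s : ℕ → ℕ)
    (hmono : ∀ i j, i ≤ j → j < r → s j ≤ s i) :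
    HasOutDegSeq r s ↔
      ∀ j, 1 ≤ j → j ≤ r →
        2 * ∑ i ∈ Finset.range j, s i ≤ j * (2 * r - 1 - j) :=
  hasOutDegSeq_iff_general r s hmono
end

section
/- For a connected graph G on at least 3 vertices with diam(G) ≤ 4, vcfc(G) = 3 if and only if G has more than one cut-vertex. -/
open SimpleGraph

/-- A vertex coloring makes `G` conflict-free vertex-connected if every pair of
distinct vertices is joined by a path on which some color appears on exactly one vertex. -/
def IsCFVertexConnColoring {V : Type*} (G : SimpleGraph V) (c : V → ℕ) : Prop :=
  ∀ u v : V, u ≠ v → ∃ p : G.Walk u v, p.IsPath ∧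
    ∃ col : ℕ, (p.support.filter (fun x => c x = col)).length = 1

/-- The conflict-free vertex-connection number of `G`. -/
noncomputable def vcfConn {V : Type*} (G : SimpleGraph V) : ℕ :=
  sInf {k | ∃ c : V → ℕ, (∀ v, c v < k) ∧ IsCFVertexConnColoring G c}

/-- `v` is a cut-vertex: deleting it disconnects the graph. -/
def IsCutVertex {V : Type*} (G : SimpleGraph V) (v : V) : Prop :=
  ¬ (G.induce {u | u ≠ v}).Connected

/-- `G` is 2-connected: it is connected and deleting any single vertex
leaves it connected. -/
def TwoConnected {V : Type*} (G : SimpleGraph V) : Prop :=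
  G.Connected ∧ ∀ v : V, (G.induce {u | u ≠ v}).Connected

/-!
Call `G.beyond z t` the set of vertices that `z` cuts off from `t`.

Two cut vertices `x ≠ y` defeat every 2-colouring. Every path from `a ∈ beyond x y` to `x` stays
in `beyond x y ∪ {x}`, so that set contains a vertex `a` coloured differently from `x`; likewise
some `b ∈ beyond y x` differs in colour from `y`. Any `a`–`b` path passes through `x` and `y`, and
with two colours each colour occurs twice among `a, b, x, y`.

With at most one cut vertex `w` it suffices to give `w` a colour of its own: if `u` and `v` lie in
one component `K` of `G - w`, then `K ∪ {w}` is 2-connected, so by Whitney's theorem (any two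
vertices of a 2-connected graph are joined by two internally disjoint paths) some `u`–`v` path
meets `w`.

With two cut vertices and diameter at most 4 there is a vertex `r` such that, seen from `r`, no cut
vertex lies beyond another vertex: otherwise four nested separations produce two vertices at
distance at least 5. Colour `r` with 0, the other cut vertices with 2 and all else with 1. A vertex
`u` of a component of `G - r` hangs on the blocks through `r` at an anchor: `u` itself, or the cut
vertex cutting `u` off from `r`. If `u` and `v` have different anchors, a path through `r` inside
those blocks (Whitney again) joins the anchors and extends to `u` and `v`; if both have the anchor
`z`, a path through `z` stays beyond `z`, where `z` is the only cut vertex.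
-/

namespace SimpleGraph

variable {V : Type*} {G : SimpleGraph V} {a b m r s t u v w x y z u' v' z' : V}

def ReachableAvoiding (G : SimpleGraph V) (z u v : V) : Prop :=
  ∃ p : G.Walk u v, z ∉ p.support

namespace ReachableAvoiding

theorem refl (hu : u ≠ z) : G.ReachableAvoiding z u u :=
  ⟨.nil, by simpa using hu.symm⟩

theorem symm (h : G.ReachableAvoiding z u v) : G.ReachableAvoiding z v u :=
  let ⟨p, hp⟩ := h
  ⟨p.reverse, by simpa using hp⟩

theorem trans (h : G.ReachableAvoiding z u v) (h' : G.ReachableAvoiding z v w) :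
    G.ReachableAvoiding z u w :=
  let ⟨p, hp⟩ := h
  let ⟨q, hq⟩ := h'
  ⟨p.append q, by simp [Walk.mem_support_append_iff, hp, hq]⟩

theorem ne_left (h : G.ReachableAvoiding z u v) : u ≠ z := by
  rintro rfl
  obtain ⟨p, hp⟩ := h
  exact hp p.start_mem_support

theorem ne_right (h : G.ReachableAvoiding z u v) : v ≠ z :=
  h.symm.ne_left

end ReachableAvoiding

namespace Walk

theorem IsPath.append {p : G.Walk u v} {q : G.Walk v w} (hp : p.IsPath) (hq : q.IsPath)
    (h : ∀ x ∈ p.support, x ∈ q.support → x = v) : (p.append q).IsPath := by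
  have hq' := hq.support_nodup
  rw [← cons_tail_support q, List.nodup_cons] at hq'
  rw [isPath_def, support_append, List.nodup_append]
  refine ⟨hp.support_nodup, hq'.2, ?_⟩
  rintro x hx _ hy rfl
  exact hq'.1 (h x hx (List.mem_of_mem_tail hy) ▸ hy)

theorem IsPath.eq_of_mem_takeUntil_of_mem_dropUntil [DecidableEq V] {p : G.Walk u v}
    (hp : p.IsPath) (hy : y ∈ p.support) (hx₁ : x ∈ (p.takeUntil y hy).support)
    (hx₂ : x ∈ (p.dropUntil y hy).support) : x = y := by
  have hnd := hp.support_nodup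
  rw [← p.take_spec hy, support_append, List.nodup_append] at hnd
  rw [← cons_tail_support, List.mem_cons] at hx₂
  exact hx₂.resolve_right fun h => hnd.2.2 x hx₁ x h rfl

theorem IsPath.reachableAvoiding_or {p : G.Walk u v} (hp : p.IsPath) (hx : x ∈ p.support)
    (hxz : x ≠ z) : G.ReachableAvoiding z u x ∨ G.ReachableAvoiding z x v := by
  classical
  by_contra! h
  refine hxz (hp.eq_of_mem_takeUntil_of_mem_dropUntil hx ?_ ?_).symm
  · by_contra hz
    exact h.1 ⟨_, hz⟩
  · by_contra hz
    exact h.2 ⟨_, hz⟩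

theorem exists_isPath_first_mem (p : G.Walk u v) {S : Set V} (hv : v ∈ S) :
    ∃ z ∈ S, ∃ q : G.Walk u z, q.IsPath ∧ q.support ⊆ p.support ∧
      ∀ x ∈ q.support, x ∈ S → x = z := by
  classical
  induction p with
  | nil => exact ⟨_, hv, nil, .nil, by simp, by simp⟩
  | @cons u m v h p ih =>
    by_cases hu : u ∈ S
    · exact ⟨u, hu, nil, .nil, by simp, by simp⟩
    obtain ⟨z, hz, q, -, hqp, hqS⟩ := ih hv
    have hsub : (q.cons h).bypass.support ⊆ u :: q.support :=
      List.Subset.trans (support_bypass_subset_support _) (by simp)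
    refine ⟨z, hz, (q.cons h).bypass, bypass_isPath _,
      List.Subset.trans hsub (by simpa using List.cons_subset_cons u hqp), fun x hx hxS => ?_⟩
    rcases List.mem_cons.1 (hsub hx) with rfl | hx
    · exact absurd hxS hu
    · exact hqS x hx hxS

def InternallyDisjoint (p q : G.Walk u v) : Prop :=
  ∀ x ∈ p.support, x ∈ q.support → x = u ∨ x = v

theorem InternallyDisjoint.symm {p q : G.Walk u v} (h : p.InternallyDisjoint q) :
    q.InternallyDisjoint p :=
  fun x hq hp => h x hp hq

end Walk

theorem reachableAvoiding_of_not_reachableAvoiding (hG : G.Preconnected)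
    (h : ¬ G.ReachableAvoiding z u w) (hwz : w ≠ z) : G.ReachableAvoiding w u z := by
  classical
  obtain ⟨p⟩ := hG u z
  by_cases hw : w ∈ p.bypass.support
  · exact absurd ⟨_, Walk.endpoint_notMem_support_takeUntil p.bypass_isPath hw hwz.symm⟩ h
  · exact ⟨_, hw⟩

def IsPathConvex (G : SimpleGraph V) (S : Set V) : Prop :=
  ∀ ⦃a b : V⦄ (p : G.Walk a b), p.IsPath → a ∈ S → b ∈ S → ∀ x ∈ p.support, x ∈ S

theorem IsPathConvex.inter {S T : Set V} (hS : G.IsPathConvex S) (hT : G.IsPathConvex T) :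
    G.IsPathConvex (S ∩ T) :=
  fun _ _ p hp ha hb x hx => ⟨hS p hp ha.1 hb.1 x hx, hT p hp ha.2 hb.2 x hx⟩

theorem isPathConvex_insert {K : Set V} (hK : ∀ x y, x ∈ K → G.ReachableAvoiding z x y → y ∈ K) :
    G.IsPathConvex (insert z K) := by
  intro a b p hp ha hb x hx
  by_cases hxz : x = z
  · exact Or.inl hxz
  rw [Set.mem_insert_iff] at ha hb
  rcases hp.reachableAvoiding_or hx hxz with h | h
  · exact Or.inr (hK a x (ha.resolve_left h.ne_left) h)
  · exact Or.inr (hK b x (hb.resolve_left h.ne_right) h.symm)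

theorem isPathConvex_insert_reachableAvoiding :
    G.IsPathConvex (insert w {x | G.ReachableAvoiding w u x}) :=
  isPathConvex_insert fun _ _ hx h => hx.trans h

def beyond (G : SimpleGraph V) (z t : V) : Set V :=
  {v | v ≠ z ∧ ¬ G.ReachableAvoiding z v t}

theorem notMem_beyond_iff : x ∉ G.beyond z t ↔ x = z ∨ G.ReachableAvoiding z x t := by
  simp only [beyond, Set.mem_ofPred_eq, not_and, not_not]
  tauto

theorem notMem_beyond_self (ht : t ≠ z) : t ∉ G.beyond z t :=
  fun h => h.2 (.refl ht)

theorem ReachableAvoiding.mem_beyond (hx : x ∈ G.beyond z t) (h : G.ReachableAvoiding z x y) :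
    y ∈ G.beyond z t :=
  ⟨h.ne_right, fun hy => hx.2 (h.trans hy)⟩

theorem isPathConvex_insert_beyond : G.IsPathConvex (insert z (G.beyond z t)) :=
  isPathConvex_insert fun _ _ hx h => h.mem_beyond hx

theorem isPathConvex_compl_beyond : G.IsPathConvex (G.beyond z t)ᶜ := by
  have : (G.beyond z t)ᶜ = insert z {x | G.ReachableAvoiding z x t} := by
    ext
    exact notMem_beyond_iff
  rw [this]
  exact isPathConvex_insert fun _ _ hx h => h.symm.trans hx

theorem connected_induce_ne_iff (ht : t ≠ z) :
    (G.induce {x | x ≠ z}).Connected ↔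
      ∀ a b, a ≠ z → b ≠ z → G.ReachableAvoiding z a b := by
  refine ⟨fun h a b ha hb => ?_, fun h => (connected_iff _).2 ⟨?_, ⟨⟨t, ht⟩⟩⟩⟩
  · obtain ⟨p⟩ := h.preconnected ⟨a, ha⟩ ⟨b, hb⟩
    refine ⟨p.map (Embedding.induce _).toHom, fun hz => ?_⟩
    obtain ⟨x, -, hx⟩ := List.mem_map.1 (Walk.support_map _ p ▸ hz)
    exact x.2 hx
  · rintro ⟨a, ha⟩ ⟨b, hb⟩
    obtain ⟨p, hp⟩ := h a b ha hb
    exact ⟨p.induce _ fun x hx => show x ≠ z from fun hxz => hp (hxz ▸ hx)⟩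

theorem isCutVertex_iff_nonempty_beyond (ht : t ≠ z) :
    IsCutVertex G z ↔ (G.beyond z t).Nonempty := by
  rw [IsCutVertex, connected_induce_ne_iff ht]
  constructor
  · intro h
    push Not at h
    obtain ⟨a, b, ha, hb, hab⟩ := h
    by_contra! hempty
    have reach : ∀ v, v ≠ z → G.ReachableAvoiding z v t := fun v hv =>
      (notMem_beyond_iff.1 (hempty ▸ Set.notMem_empty v)).resolve_left hv
    exact hab ((reach a ha).trans (reach b hb).symm)
  · rintro ⟨v, hv, hvt⟩ h
    exact hvt (h v t hv ht)

theorem _root_.IsCutVertex.nonempty_beyond (h : IsCutVertex G z) (ht : t ≠ z) :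
    (G.beyond z t).Nonempty :=
  (isCutVertex_iff_nonempty_beyond ht).1 h

theorem isCutVertex_of_mem_beyond (hx : x ∈ G.beyond z t) (ht : t ≠ z) : IsCutVertex G z :=
  (isCutVertex_iff_nonempty_beyond ht).2 ⟨x, hx⟩

theorem ReachableAvoiding.of_not_isCutVertex (h : ¬ IsCutVertex G z) (hu : u ≠ z) (hv : v ≠ z) :
    G.ReachableAvoiding z u v := by
  by_contra huv
  exact h (isCutVertex_of_mem_beyond ⟨hu, huv⟩ hv)

theorem _root_.TwoConnected.reachableAvoiding (hG : TwoConnected G) (hu : u ≠ z) (hv : v ≠ z) :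
    G.ReachableAvoiding z u v :=
  (connected_induce_ne_iff hu).1 (hG.2 z) u v hu hv

namespace Walk

theorem InternallyDisjoint.exists_internallyDisjoint_of_ear {P₁ P₂ : G.Walk s m}
    (hd : P₁.InternallyDisjoint P₂) (hP₁ : P₁.IsPath) (hP₂ : P₂.IsPath) (hmt : G.Adj m t)
    (hts : t ≠ s) {R : G.Walk t z} (hR : R.IsPath) (hz : z ∈ P₁.support) (hm : m ∉ R.support)
    (hhit : ∀ x ∈ R.support, x ∈ P₁.support ∨ x ∈ P₂.support → x = z) :
    ∃ p q : G.Walk s t, p.IsPath ∧ q.IsPath ∧ p.InternallyDisjoint q := by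
  classical
  have hzm : z ≠ m := fun h => hm (h ▸ R.end_mem_support)
  have htP₂ : t ∉ P₂.support := by
    intro ht
    obtain rfl := hhit t R.start_mem_support (Or.inr ht)
    rcases hd t hz ht with h | h
    exacts [hts h, hzm h]
  refine ⟨(P₁.takeUntil z hz).append R.reverse, P₂.concat hmt, ?_, hP₂.concat htP₂ hmt, ?_⟩
  · refine (hP₁.takeUntil hz).append hR.reverse fun x hx hx' => ?_
    exact hhit x (by simpa using hx') (Or.inl (support_takeUntil_subset_support _ hz hx))
  · intro x hx hx'
    rw [support_concat, List.mem_append, List.mem_singleton] at hx'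
    rcases hx' with hx' | rfl
    · rw [mem_support_append_iff, support_reverse, List.mem_reverse] at hx
      rcases hx with hx | hx
      · rcases hd x (support_takeUntil_subset_support _ hz hx) hx' with h | rfl
        · exact Or.inl h
        · exact absurd hx (endpoint_notMem_support_takeUntil hP₁ hz hzm.symm)
      · obtain rfl := hhit x hx (Or.inr hx')
        rcases hd x hz hx' with h | h
        exacts [Or.inl h, absurd h hzm]
    · exact Or.inr rfl

theorem InternallyDisjoint.exists_internallyDisjoint_of_adj {P₁ P₂ : G.Walk s m}
    (hd : P₁.InternallyDisjoint P₂) (hP₁ : P₁.IsPath) (hP₂ : P₂.IsPath) (hmt : G.Adj m t)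
    (hts : t ≠ s) (hR : G.ReachableAvoiding m t s) :
    ∃ p q : G.Walk s t, p.IsPath ∧ q.IsPath ∧ p.InternallyDisjoint q := by
  obtain ⟨R, hR⟩ := hR
  obtain ⟨z, hz, R', hR', hsub, hhit⟩ := R.exists_isPath_first_mem
    (S := {x | x ∈ P₁.support ∨ x ∈ P₂.support}) (Or.inl P₁.start_mem_support)
  have hm : m ∉ R'.support := fun h => hR (hsub h)
  rcases hz with hz | hz
  · exact hd.exists_internallyDisjoint_of_ear hP₁ hP₂ hmt hts hR' hz hm hhit
  · exact hd.symm.exists_internallyDisjoint_of_ear hP₂ hP₁ hmt hts hR' hz hm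
      fun x hx h => hhit x hx h.symm

theorem InternallyDisjoint.exists_isPath_mem_support_of_ear {P₁ P₂ : G.Walk u w}
    (hd : P₁.InternallyDisjoint P₂) (hP₁ : P₁.IsPath) (hP₂ : P₂.IsPath) {R : G.Walk v z}
    (hR : R.IsPath) (hz : z ∈ P₁.support) (hzu : z ≠ u)
    (hhit : ∀ x ∈ R.support, x ∈ P₁.support ∨ x ∈ P₂.support → x = z) :
    ∃ p : G.Walk u v, p.IsPath ∧ w ∈ p.support := by
  classical
  have hinner : ((P₁.dropUntil z hz).reverse.append R.reverse).IsPath := by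
    refine (hP₁.dropUntil hz).reverse.append hR.reverse fun x hx hx' => ?_
    simp only [support_reverse, List.mem_reverse] at hx hx'
    exact hhit x hx' (Or.inl (support_dropUntil_subset_support _ hz hx))
  refine ⟨P₂.append _, hP₂.append hinner fun x hx₂ hx => ?_,
    (mem_support_append_iff _ _).2 (Or.inl P₂.end_mem_support)⟩
  simp only [mem_support_append_iff, support_reverse, List.mem_reverse] at hx
  rcases hx with hx | hx
  · rcases hd x (support_dropUntil_subset_support _ hz hx) hx₂ with rfl | h
    · exact absurd (hP₁.eq_of_mem_takeUntil_of_mem_dropUntil hz (start_mem_support _) hx).symm hzu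
    · exact h
  · obtain rfl := hhit x hx (Or.inr hx₂)
    exact (hd x hz hx₂).resolve_left hzu

end Walk

theorem _root_.TwoConnected.exists_internallyDisjoint (hG : TwoConnected G) (hst : s ≠ t) :
    ∃ p q : G.Walk s t, p.IsPath ∧ q.IsPath ∧ p.InternallyDisjoint q := by
  obtain ⟨R⟩ := hG.1.preconnected t s
  induction R with
  | nil => exact absurd rfl hst
  | @cons t m s hadj R ih =>
    by_cases hms : m = s
    · subst hms
      exact ⟨hadj.symm.toWalk, hadj.symm.toWalk, hadj.symm.isPath_toWalk,
        hadj.symm.isPath_toWalk, fun x hx _ => by simpa using hx⟩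
    · obtain ⟨P₁, P₂, h₁, h₂, hd⟩ := ih (Ne.symm hms)
      exact hd.exists_internallyDisjoint_of_adj h₁ h₂ hadj.symm (Ne.symm hst)
        (hG.reachableAvoiding hadj.ne (Ne.symm hms))

theorem _root_.TwoConnected.exists_isPath_mem_support (hG : TwoConnected G) (huv : u ≠ v)
    (huw : u ≠ w) : ∃ p : G.Walk u v, p.IsPath ∧ w ∈ p.support := by
  obtain ⟨P₁, P₂, h₁, h₂, hd⟩ := hG.exists_internallyDisjoint huw
  obtain ⟨R, hR⟩ := hG.reachableAvoiding huv.symm huw.symm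
  obtain ⟨z, hz, R', hR', hsub, hhit⟩ := R.exists_isPath_first_mem
    (S := {x | x ∈ P₁.support ∨ x ∈ P₂.support}) (Or.inl P₁.end_mem_support)
  have hzu : z ≠ u := fun h => hR (hsub (h ▸ R'.end_mem_support))
  rcases hz with hz | hz
  · exact hd.exists_isPath_mem_support_of_ear h₁ h₂ hR' hz hzu hhit
  · exact hd.symm.exists_isPath_mem_support_of_ear h₂ h₁ hR' hz hzu fun x hx h => hhit x hx h.symm

theorem IsPathConvex.exists_induce_walk {S : Set V} (hS : G.IsPathConvex S) {a b : S}
    (p : G.Walk a b) : ∃ q : (G.induce S).Walk a b, ∀ x ∈ q.support, (x : V) ∈ p.support := by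
  classical
  refine ⟨p.bypass.induce S fun x hx => hS _ p.bypass_isPath a.2 b.2 x hx, fun x hx => ?_⟩
  rw [Walk.support_induce, List.mem_attachWith] at hx
  exact p.support_bypass_subset_support hx

theorem IsPathConvex.twoConnected_induce {S : Set V} (hG : G.Preconnected)
    (hS : G.IsPathConvex S)
    (h2 : ∀ z ∈ S, ∀ a ∈ S, ∀ b ∈ S, a ≠ z → b ≠ z → G.ReachableAvoiding z a b)
    (ha : a ∈ S) (hb : b ∈ S) (hab : a ≠ b) : TwoConnected (G.induce S) := by
  refine ⟨(connected_iff _).2 ⟨fun x y => ?_, ⟨⟨a, ha⟩⟩⟩, fun z => ?_⟩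
  · obtain ⟨p⟩ := hG x y
    obtain ⟨q, -⟩ := hS.exists_induce_walk p
    exact ⟨q⟩
  obtain ⟨t, ht⟩ : ∃ t : S, t ≠ z := by
    by_cases h : z = ⟨a, ha⟩
    · exact ⟨⟨b, hb⟩, fun h' => hab (congrArg Subtype.val (h'.trans h)).symm⟩
    · exact ⟨⟨a, ha⟩, Ne.symm h⟩
  refine (connected_induce_ne_iff ht).2 fun x y hx hy => ?_
  obtain ⟨p, hp⟩ := h2 z z.2 x x.2 y y.2 (Subtype.coe_ne_coe.2 hx) (Subtype.coe_ne_coe.2 hy)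
  obtain ⟨q, hq⟩ := hS.exists_induce_walk p
  exact ⟨q, fun hz => hp (hq z hz)⟩

theorem IsPathConvex.exists_isPath_mem_support {S : Set V} (hG : G.Preconnected)
    (hS : G.IsPathConvex S)
    (h2 : ∀ z ∈ S, ∀ a ∈ S, ∀ b ∈ S, a ≠ z → b ≠ z → G.ReachableAvoiding z a b)
    (hu : u ∈ S) (hv : v ∈ S) (hw : w ∈ S) (huv : u ≠ v) (huw : u ≠ w) :
    ∃ p : G.Walk u v, p.IsPath ∧ w ∈ p.support := by
  obtain ⟨p, hp, hwp⟩ := (hS.twoConnected_induce hG h2 hu hv huv).exists_isPath_mem_support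
    (u := ⟨u, hu⟩) (v := ⟨v, hv⟩) (w := ⟨w, hw⟩) (by simpa using huv) (by simpa using huw)
  let q : G.Walk u v := p.map (Embedding.induce S).toHom
  have hq : q.support = p.support.map Subtype.val := Walk.support_map _ _
  exact ⟨q, hp.map (Embedding.induce (G := G) S).injective, hq ▸ List.mem_map_of_mem hwp⟩

theorem _root_.List.Nodup.exists_length_filter_eq_one_iff {α : Type*} {l : List α} (hl : l.Nodup)
    (c : α → ℕ) :
    (∃ col, (l.filter fun x => c x = col).length = 1) ↔ ∃ e ∈ l, ∀ x ∈ l, c x = c e → x = e := by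
  classical
  constructor
  · rintro ⟨col, h⟩
    obtain ⟨e, he⟩ := List.length_eq_one_iff.1 h
    have hmem : ∀ x, x ∈ l ∧ c x = col ↔ x = e := fun x => by
      simpa using congrArg (x ∈ ·) he
    obtain ⟨hel, hec⟩ := (hmem e).2 rfl
    exact ⟨e, hel, fun x hx hcx => (hmem x).1 ⟨hx, hcx.trans hec⟩⟩
  · rintro ⟨e, he, huniq⟩
    refine ⟨c e, ?_⟩
    rw [← List.count_eq_one_of_mem hl he, List.count_eq_length_filter]
    congr 1
    refine List.filter_congr fun x hx => ?_
    rw [Bool.eq_iff_iff, decide_eq_true_eq, beq_iff_eq]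
    exact ⟨huniq x hx, fun h => h ▸ rfl⟩

theorem isCFVertexConnColoring_iff {c : V → ℕ} :
    IsCFVertexConnColoring G c ↔ ∀ u v, u ≠ v →
      ∃ p : G.Walk u v, p.IsPath ∧ ∃ e ∈ p.support, ∀ x ∈ p.support, c x = c e → x = e := by
  refine forall₃_congr fun u v _ => exists_congr fun p => ?_
  exact ⟨fun ⟨hp, h⟩ => ⟨hp, (hp.support_nodup.exists_length_filter_eq_one_iff c).1 h⟩,
    fun ⟨hp, h⟩ => ⟨hp, (hp.support_nodup.exists_length_filter_eq_one_iff c).2 h⟩⟩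

theorem _root_.IsCFVertexConnColoring.exists_mem_beyond_color_ne {c : V → ℕ}
    (hcf : IsCFVertexConnColoring G c) (ha : a ∈ G.beyond z t) :
    ∃ b ∈ G.beyond z t, c b ≠ c z := by
  by_contra! hmono
  obtain ⟨p, hp, e, he, huniq⟩ := isCFVertexConnColoring_iff.1 hcf a z ha.1
  have hcol : ∀ x ∈ p.support, c x = c z := fun x hx => by
    rcases isPathConvex_insert_beyond p hp (Or.inr ha) (Or.inl rfl) x hx with rfl | hx
    exacts [rfl, hmono x hx]
  have hsame : ∀ x ∈ p.support, x = e := fun x hx => huniq x hx ((hcol x hx).trans (hcol e he).symm)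
  exact ha.1 ((hsame a p.start_mem_support).trans (hsame z p.end_mem_support).symm)

theorem not_reachableAvoiding_of_mem_beyond (hG : G.Preconnected) (hxy : x ≠ y)
    (ha : a ∈ G.beyond x y) (hb : b ∈ G.beyond y x) : ¬ G.ReachableAvoiding x a b :=
  fun h => ha.2 (h.trans (reachableAvoiding_of_not_reachableAvoiding hG hb.2 hxy))

theorem not_isCFVertexConnColoring_of_isCutVertex (hG : G.Preconnected) (hxy : x ≠ y)
    (hx : IsCutVertex G x) (hy : IsCutVertex G y) {c : V → ℕ} (hc : ∀ v, c v < 2) :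
    ¬ IsCFVertexConnColoring G c := by
  intro hcf
  obtain ⟨a, ha, hca⟩ := hcf.exists_mem_beyond_color_ne (hx.nonempty_beyond hxy.symm).some_mem
  obtain ⟨b, hb, hcb⟩ := hcf.exists_mem_beyond_color_ne (hy.nonempty_beyond hxy).some_mem
  have hxab := not_reachableAvoiding_of_mem_beyond hG hxy ha hb
  have hyab : ¬ G.ReachableAvoiding y a b :=
    fun h => not_reachableAvoiding_of_mem_beyond hG hxy.symm hb ha h.symm
  have hab : a ≠ b := fun h => hxab (h ▸ .refl ha.1)
  obtain ⟨p, hp, e, -, huniq⟩ := isCFVertexConnColoring_iff.1 hcf a b hab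
  have hxp : x ∈ p.support := by
    by_contra h
    exact hxab ⟨p, h⟩
  have hyp : y ∈ p.support := by
    by_contra h
    exact hyab ⟨p, h⟩
  have hsame : ∀ x₁ ∈ p.support, ∀ x₂ ∈ p.support, c x₁ = c e → c x₂ = c e → x₁ = x₂ :=
    fun x₁ h₁ x₂ h₂ hc₁ hc₂ => (huniq x₁ h₁ hc₁).trans (huniq x₂ h₂ hc₂).symm
  -- with two colours, `c a ≠ c x` and `c b ≠ c y` force each colour twice among `a, b, x, y`
  have h₁ : c x = c e ∨ c a = c e := by have := hc x; have := hc a; have := hc e; omega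
  have h₂ : c y = c e ∨ c b = c e := by have := hc y; have := hc b; have := hc e; omega
  rcases h₁ with h₁ | h₁ <;> rcases h₂ with h₂ | h₂
  · exact hxy (hsame x hxp y hyp h₁ h₂)
  · obtain rfl := hsame x hxp b p.end_mem_support h₁ h₂
    exact notMem_beyond_self hxy hb
  · obtain rfl := hsame y hyp a p.start_mem_support h₂ h₁
    exact notMem_beyond_self hxy.symm ha
  · exact hab (hsame a p.start_mem_support b p.end_mem_support h₁ h₂)

theorem exists_isPath_mem_support_of_not_isCutVertex (hG : G.Preconnected) (huv : u ≠ v)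
    (hK : ∀ x, G.ReachableAvoiding w u x → ¬ IsCutVertex G x) :
    ∃ p : G.Walk u v, p.IsPath ∧ w ∈ p.support := by
  classical
  by_cases h : G.ReachableAvoiding w u v
  · refine isPathConvex_insert_reachableAvoiding.exists_isPath_mem_support hG ?_
      (Or.inr (.refl h.ne_left)) (Or.inr h) (Or.inl rfl) huv h.ne_left
    rintro z (rfl | hz) a ha b hb haz hbz
    · exact (ha.resolve_left haz).symm.trans (hb.resolve_left hbz)
    · exact .of_not_isCutVertex (hK z hz) haz hbz
  · obtain ⟨p⟩ := hG u v
    refine ⟨p.bypass, p.bypass_isPath, ?_⟩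
    by_contra hw
    exact h ⟨_, hw⟩

theorem exists_cfColoring_lt_two_of_subsingleton (hG : G.Connected)
    (h : {x | IsCutVertex G x}.Subsingleton) :
    ∃ c : V → ℕ, (∀ v, c v < 2) ∧ IsCFVertexConnColoring G c := by
  classical
  obtain ⟨w, hw⟩ : ∃ w, ∀ x, IsCutVertex G x → x = w := by
    by_cases hc : ∃ x, IsCutVertex G x
    · obtain ⟨x, hx⟩ := hc
      exact ⟨x, fun y hy => h hy hx⟩
    · exact ⟨hG.nonempty.some, fun x hx => (hc ⟨x, hx⟩).elim⟩
  refine ⟨fun x => if x = w then 0 else 1, fun x => by dsimp only; split_ifs <;> omega,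
    isCFVertexConnColoring_iff.2 fun u v huv => ?_⟩
  obtain ⟨p, hp, hwp⟩ := exists_isPath_mem_support_of_not_isCutVertex hG.preconnected huv
    fun x hx hxc => hx.ne_right (hw x hxc)
  exact ⟨p, hp, w, hwp, fun x _ hx => by simpa using hx⟩

def NoCutVertexBeyond (G : SimpleGraph V) (r : V) : Prop :=
  ∀ z, z ≠ r → ∀ x ∈ G.beyond z r, ¬ IsCutVertex G x

/-- The union of the blocks through `r` that meet the component of `G - r` containing `u`. -/
def core (G : SimpleGraph V) (r u : V) : Set V :=
  insert r {x | G.ReachableAvoiding r u x} ∩ {x | ∀ z, z ≠ r → x ∉ G.beyond z r}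

theorem mem_core_self : r ∈ G.core r u :=
  ⟨Or.inl rfl, fun _ hz => notMem_beyond_self hz.symm⟩

theorem isPathConvex_core : G.IsPathConvex (G.core r u) :=
  isPathConvex_insert_reachableAvoiding.inter fun _ _ p hp ha hb x hx z hz =>
    isPathConvex_compl_beyond p hp (ha z hz) (hb z hz) x hx

theorem reachableAvoiding_of_mem_core (ha : a ∈ G.core r u) (hb : b ∈ G.core r u) (haz : a ≠ z)
    (hbz : b ≠ z) : G.ReachableAvoiding z a b := by
  by_cases hzr : z = r
  · subst hzr
    exact (ha.1.resolve_left haz).symm.trans (hb.1.resolve_left hbz)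
  · exact ((notMem_beyond_iff.1 (ha.2 z hzr)).resolve_left haz).trans
      ((notMem_beyond_iff.1 (hb.2 z hzr)).resolve_left hbz).symm

namespace NoCutVertexBeyond

theorem disjoint_beyond (hG : G.Preconnected) (hr : G.NoCutVertexBeyond r) (hzz' : z ≠ z')
    (hz : z ≠ r) (hz' : z' ≠ r) :
    Disjoint (G.beyond z r) (G.beyond z' r) := by
  refine Set.disjoint_left.2 fun x hx hx' => ?_
  have hzr : G.ReachableAvoiding z z' r := (notMem_beyond_iff.1 fun h =>
    hr z hz z' h (isCutVertex_of_mem_beyond hx' hz'.symm)).resolve_left hzz'.symm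
  have hz'r : G.ReachableAvoiding z' z r := (notMem_beyond_iff.1 fun h =>
    hr z' hz' z h (isCutVertex_of_mem_beyond hx hz.symm)).resolve_left hzz'
  by_cases h : G.ReachableAvoiding z x z'
  · exact hx.2 (h.trans hzr)
  · exact hx'.2 ((reachableAvoiding_of_not_reachableAvoiding hG h hzz'.symm).trans hz'r)

theorem exists_anchor (hG : G.Preconnected) (hr : G.NoCutVertexBeyond r)
    (hx : G.ReachableAvoiding r u x) :
    ∃ y ∈ G.core r u, y ≠ r ∧ x ∈ insert y (G.beyond y r) := by
  by_cases h : ∃ z, z ≠ r ∧ x ∈ G.beyond z r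
  · obtain ⟨z, hzr, hxz⟩ := h
    refine ⟨z, ⟨Or.inr (hx.trans (reachableAvoiding_of_not_reachableAvoiding hG hxz.2 hzr.symm)),
      fun z' hz' hzz' => hr z' hz' z hzz' (isCutVertex_of_mem_beyond hxz hzr.symm)⟩, hzr,
      Or.inr hxz⟩
  · push Not at h
    exact ⟨x, ⟨Or.inr hx, h⟩, hx.ne_right, Or.inl rfl⟩

theorem exists_isPath_of_mem_insert_beyond (hG : G.Preconnected) (hr : G.NoCutVertexBeyond r)
    (hzr : z ≠ r) (hu : u ∈ insert z (G.beyond z r)) (hv : v ∈ insert z (G.beyond z r))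
    (huv : u ≠ v) :
    ∃ p : G.Walk u v, p.IsPath ∧ z ∈ p.support ∧ IsCutVertex G z ∧
      ∀ x ∈ p.support, x ≠ r → IsCutVertex G x → x = z := by
  rw [Set.mem_insert_iff] at hu hv
  have hK : ∀ x, G.ReachableAvoiding z u x → ¬ IsCutVertex G x :=
    fun x hx => hr z hzr x (hx.mem_beyond (hu.resolve_left hx.ne_left))
  obtain ⟨p, hp, hzp⟩ := exists_isPath_mem_support_of_not_isCutVertex hG huv hK
  have hcut : IsCutVertex G z := by
    rcases hu with rfl | hu
    · exact isCutVertex_of_mem_beyond (hv.resolve_left (Ne.symm huv)) hzr.symm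
    · exact isCutVertex_of_mem_beyond hu hzr.symm
  refine ⟨p, hp, hzp, hcut, fun x hx _ hxc => ?_⟩
  rcases isPathConvex_insert_beyond p hp hu hv x hx with h | h
  exacts [h, absurd hxc (hr z hzr x h)]

theorem exists_isPath_mem_support_of_anchors (hG : G.Preconnected) (hr : G.NoCutVertexBeyond r)
    (hu' : u' ∈ G.core r w) (hv' : v' ∈ G.core r w) (hu'r : u' ≠ r) (hv'r : v' ≠ r)
    (hu'v' : u' ≠ v') (hu : u ∈ insert u' (G.beyond u' r)) (hv : v ∈ insert v' (G.beyond v' r)) :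
    ∃ p : G.Walk u v, p.IsPath ∧ r ∈ p.support := by
  classical
  obtain ⟨q, hq, hrq⟩ := isPathConvex_core.exists_isPath_mem_support hG
    (fun _ _ _ ha _ hb => reachableAvoiding_of_mem_core ha hb) hu' hv' mem_core_self hu'v' hu'r
  have hqC := isPathConvex_core q hq hu' hv'
  obtain ⟨p₁⟩ := hG u u'
  obtain ⟨p₃⟩ := hG v' v
  have hp₁ := isPathConvex_insert_beyond _ p₁.bypass_isPath hu (Set.mem_insert _ _)
  have hp₃ := isPathConvex_insert_beyond _ p₃.bypass_isPath (Set.mem_insert _ _) hv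
  refine ⟨(p₁.bypass.append q).append p₃.bypass,
    (p₁.bypass_isPath.append hq fun x hx₁ hxq => ?_).append p₃.bypass_isPath fun x hx hx₃ => ?_,
    by simp [hrq]⟩
  · exact (hp₁ x hx₁).resolve_right ((hqC x hxq).2 u' hu'r)
  · refine (hp₃ x hx₃).resolve_right fun hxb => ?_
    rcases (Walk.mem_support_append_iff _ _).1 hx with hx₁ | hxq
    · rcases hp₁ x hx₁ with rfl | hxb'
      · exact hu'.2 v' hv'r hxb
      · exact Set.disjoint_left.1 (hr.disjoint_beyond hG hu'v' hu'r hv'r) hxb' hxb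
    · exact (hqC x hxq).2 v' hv'r hxb

theorem exists_isPath_mem_support_or_unique_cutVertex (hG : G.Preconnected)
    (hr : G.NoCutVertexBeyond r) (huv : u ≠ v) :
    ∃ p : G.Walk u v, p.IsPath ∧ (r ∈ p.support ∨ ∃ z ∈ p.support, z ≠ r ∧ IsCutVertex G z ∧
      ∀ x ∈ p.support, x ≠ r → IsCutVertex G x → x = z) := by
  classical
  by_cases huvr : G.ReachableAvoiding r u v
  · obtain ⟨u', hu'C, hu'r, hu⟩ := hr.exists_anchor hG (.refl huvr.ne_left)
    obtain ⟨v', hv'C, hv'r, hv⟩ := hr.exists_anchor hG huvr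
    by_cases hu'v' : u' = v'
    · subst hu'v'
      obtain ⟨p, hp, hzp, hcut, huniq⟩ :=
        hr.exists_isPath_of_mem_insert_beyond hG hu'r hu hv huv
      exact ⟨p, hp, Or.inr ⟨u', hzp, hu'r, hcut, huniq⟩⟩
    · obtain ⟨p, hp, hrp⟩ :=
        hr.exists_isPath_mem_support_of_anchors hG hu'C hv'C hu'r hv'r hu'v' hu hv
      exact ⟨p, hp, Or.inl hrp⟩
  · obtain ⟨p⟩ := hG u v
    refine ⟨p.bypass, p.bypass_isPath, Or.inl ?_⟩
    by_contra h
    exact huvr ⟨_, h⟩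

theorem exists_cfColoring_lt_three (hG : G.Preconnected) (hr : G.NoCutVertexBeyond r) :
    ∃ c : V → ℕ, (∀ v, c v < 3) ∧ IsCFVertexConnColoring G c := by
  classical
  refine ⟨fun x => if x = r then 0 else if IsCutVertex G x then 2 else 1,
    fun x => by dsimp only; split_ifs <;> omega, isCFVertexConnColoring_iff.2 fun u v huv => ?_⟩
  obtain ⟨p, hp, hrp | ⟨z, hz, hzr, hzc, huniq⟩⟩ :=
    hr.exists_isPath_mem_support_or_unique_cutVertex hG huv
  · refine ⟨p, hp, r, hrp, fun x _ hcx => ?_⟩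
    by_contra hxr
    rw [if_neg hxr, if_pos rfl] at hcx
    split_ifs at hcx
  · refine ⟨p, hp, z, hz, fun x hx hcx => ?_⟩
    rw [if_neg hzr, if_pos hzc] at hcx
    split_ifs at hcx with hxr hxc
    · exact huniq x hx hxr hxc
    · omega

end NoCutVertexBeyond

theorem dist_lt_of_not_reachableAvoiding (h : ¬ G.ReachableAvoiding z a b) (hzb : z ≠ b)
    (hab : G.Reachable a b) : G.dist a z < G.dist a b := by
  classical
  obtain ⟨p, hp⟩ := hab.exists_walk_length_eq_dist
  have hz : z ∈ p.support := by
    by_contra hz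
    exact h ⟨p, hz⟩
  calc G.dist a z ≤ (p.takeUntil z hz).length := dist_le _
    _ < p.length := Walk.length_takeUntil_lt_length hz hzb
    _ = G.dist a b := hp

theorem exists_noCutVertexBeyond (hG : G.Connected) (hdist : ∀ a b, G.dist a b ≤ 4)
    (hx : IsCutVertex G x) : ∃ r, G.NoCutVertexBeyond r := by
  have hpre := hG.preconnected
  by_cases hx' : G.NoCutVertexBeyond x
  · exact ⟨x, hx'⟩
  obtain ⟨z, hzx, z', hz', hz'c⟩ : ∃ z, z ≠ x ∧ ∃ z' ∈ G.beyond z x, IsCutVertex G z' := by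
    simpa [NoCutVertexBeyond] using hx'
  refine ⟨z, fun w hwz w' hw' hw'c => ?_⟩
  -- a chain `a, c₀, z, w, w', β` of successive separations: a shortest `a`–`β` path is too long
  obtain ⟨a, c₀, hac₀, hc₀z, h₀, h₁⟩ : ∃ a c₀, a ≠ c₀ ∧ c₀ ≠ z ∧
      ¬ G.ReachableAvoiding c₀ a z ∧ ¬ G.ReachableAvoiding z a w := by
    by_cases hw : G.ReachableAvoiding z w z'
    · obtain ⟨α, hα⟩ := hx.nonempty_beyond hzx
      refine ⟨α, x, hα.1, hzx.symm, hα.2, fun h => hz'.2 ?_⟩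
      exact (hw.symm.trans h.symm).trans (reachableAvoiding_of_not_reachableAvoiding hpre hα.2 hzx)
    · obtain ⟨γ, hγ⟩ := hz'c.nonempty_beyond hz'.1.symm
      refine ⟨γ, z', hγ.1, hz'.1, hγ.2, fun h => hw ?_⟩
      exact h.symm.trans (reachableAvoiding_of_not_reachableAvoiding hpre hγ.2 hz'.1.symm)
  obtain ⟨β, hβ⟩ := hw'c.nonempty_beyond hw'.1.symm
  have h₂ : ¬ G.ReachableAvoiding w a w' := fun h =>
    hw'.2 (h.symm.trans (reachableAvoiding_of_not_reachableAvoiding hpre h₁ hwz))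
  have h₃ : ¬ G.ReachableAvoiding w' a β := fun h =>
    hβ.2 (h.symm.trans (reachableAvoiding_of_not_reachableAvoiding hpre h₂ hw'.1))
  have := (hG a c₀).pos_dist_of_ne hac₀
  have := dist_lt_of_not_reachableAvoiding h₀ hc₀z (hG a z)
  have := dist_lt_of_not_reachableAvoiding h₁ (Ne.symm hwz) (hG a w)
  have := dist_lt_of_not_reachableAvoiding h₂ (Ne.symm hw'.1) (hG a w')
  have := dist_lt_of_not_reachableAvoiding h₃ (Ne.symm hβ.1) (hG a β)
  have := hdist a β
  omega

end SimpleGraph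

theorem vcfConn_le {V : Type*} {G : SimpleGraph V} {k : ℕ} {c : V → ℕ} (hc : ∀ v, c v < k)
    (hcf : IsCFVertexConnColoring G c) : vcfConn G ≤ k :=
  Nat.sInf_le ⟨c, hc, hcf⟩

theorem vcfConn_eq_succ {V : Type*} {G : SimpleGraph V} {k : ℕ} {c : V → ℕ}
    (hc : ∀ v, c v < k + 1) (hcf : IsCFVertexConnColoring G c)
    (hk : ∀ c : V → ℕ, (∀ v, c v < k) → ¬ IsCFVertexConnColoring G c) : vcfConn G = k + 1 := by
  refine le_antisymm (vcfConn_le hc hcf) (Nat.succ_le_of_lt (not_le.1 fun hle => ?_))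
  obtain ⟨c', hc', hcf'⟩ := Nat.sInf_mem (s := {k | ∃ c : V → ℕ, (∀ v, c v < k) ∧
    IsCFVertexConnColoring G c}) ⟨k + 1, c, hc, hcf⟩
  exact hk c' (fun v => (hc' v).trans_le hle) hcf'

theorem vcfConn_eq_three_iff_general {V : Type*} [Fintype V] (G : SimpleGraph V)
    (hconn : G.Connected) (hdiam : G.diam ≤ 4) :
    vcfConn G = 3 ↔
      ∃ x y : V, x ≠ y ∧ IsCutVertex G x ∧ IsCutVertex G y := by
  constructor
  · intro h3
    by_contra! hno
    obtain ⟨c, hc, hcf⟩ := exists_cfColoring_lt_two_of_subsingleton hconn fun x hx y hy =>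
      by_contra fun hxy => hno x y hxy hx hy
    have := vcfConn_le hc hcf
    omega
  · rintro ⟨x, y, hxy, hx, hy⟩
    have : Nonempty V := hconn.nonempty
    have hdist : ∀ a b, G.dist a b ≤ 4 :=
      fun a b => (dist_le_diam (connected_iff_ediam_ne_top.1 hconn)).trans hdiam
    obtain ⟨r, hr⟩ := exists_noCutVertexBeyond hconn hdist hx
    obtain ⟨c, hc, hcf⟩ := hr.exists_cfColoring_lt_three hconn.preconnected
    exact vcfConn_eq_succ hc hcf fun c' hc' =>
      not_isCFVertexConnColoring_of_isCutVertex hconn.preconnected hxy hx hy hc'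

/-- For a connected graph `G` on at least `3` vertices with `diam(G) ≤ 4`,
`vcfc(G) = 3` if and only if `G` has more than one cut-vertex. -/
theorem vcfConn_eq_three_iff {V : Type*} [Fintype V] (G : SimpleGraph V)
    (hcard : 3 ≤ Fintype.card V) (hconn : G.Connected) (hdiam : G.diam ≤ 4) :
    vcfConn G = 3 ↔
      ∃ x y : V, x ≠ y ∧ IsCutVertex G x ∧ IsCutVertex G y :=
  vcfConn_eq_three_iff_general G hconn hdiam
end
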